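/- Let ρ ∈ (0,1) and (x_i)_{i∈ℤ} be bounded. Define y_i via the distributed recursion: y_i(0) = ((1-ρ)/(1+ρ)) x_i; y_i(1) = y_i(0) + ρ(y_{i-1}(0) + y_{i+1}(0)); y_i(2) = y_i(1) + ρ(y_{i-1}(1) - y_{i-1}(0)) + ρ(y_{i+1}(1) - y_{i+1}(0)) - 2ρ² y_i(0); and for k ≥ 2, y_i(k+1) = y_i(k) + ρ(y_{i-1}(k) - y_{i-1}(k-1)) + ρ(y_{i+1}(k) - y_{i+1}(k-1)) - ρ²(y_i(k-1) - y_i(k-2)). Then for all k ≥ 1 and all i, y_i(k) = y_i(k-1) + ρ^k (y_{i-k}(0) + y_{i+k}(0)). -/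

import Mathlib

/-!
Write `u i = y i 0` and `d k i = y i k - y i (k - 1)`. The recursion says exactly that the increments
satisfy `d (k + 2) i = ρ (d (k + 1) (i - 1) + d (k + 1) (i + 1)) - ρ² d k i`, and the two
symmetric pulses `ρ ^ k (u (i - k) + u (i + k))` satisfy the same second-order recursion: the
cross terms `ρ ^ (k + 2) (u (i - k) + u (i + k))` produced by the neighbours are cancelled by the
`ρ²` term. Since both agree for `k = 1, 2`, they agree for all `k ≥ 1`.
-/

section Pulse

variable {R : Type*} [CommRing R]

def pulse (ρ : R) (u : ℤ → R) (k : ℕ) (i : ℤ) : R := ρ ^ k * (u (i - k) + u (i + k))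

theorem pulse_add_two (ρ : R) (u : ℤ → R) (k : ℕ) (i : ℤ) :
    pulse ρ u (k + 2) i =
      ρ * (pulse ρ u (k + 1) (i - 1) + pulse ρ u (k + 1) (i + 1)) - ρ ^ 2 * pulse ρ u k i := by
  simp only [pulse]
  push_cast
  ring_nf

theorem eq_pulse_of_recurrence {ρ : R} {u : ℤ → R} {d : ℕ → ℤ → R}
    (h1 : ∀ i, d 1 i = pulse ρ u 1 i) (h2 : ∀ i, d 2 i = pulse ρ u 2 i)
    (hrec : ∀ k, 1 ≤ k → ∀ i,
      d (k + 2) i = ρ * (d (k + 1) (i - 1) + d (k + 1) (i + 1)) - ρ ^ 2 * d k i) :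
    ∀ k, 1 ≤ k → ∀ i, d k i = pulse ρ u k i := by
  have pair : ∀ n, (∀ i, d (n + 1) i = pulse ρ u (n + 1) i) ∧
      (∀ i, d (n + 2) i = pulse ρ u (n + 2) i) := by
    intro n
    induction n with
    | zero => exact ⟨h1, h2⟩
    | succ n ih =>
      refine ⟨ih.2, fun i => ?_⟩
      rw [hrec (n + 1) (by omega), ih.2, ih.2, ih.1]
      exact (pulse_add_two ρ u (n + 1) i).symm
  intro k hk
  obtain ⟨n, rfl⟩ := Nat.exists_eq_add_of_le' hk
  exact (pair n).1

end Pulse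

theorem stmt1_general (ρ : ℝ)
    (y : ℤ → ℕ → ℝ)
    (h1 : ∀ i, y i 1 = y i 0 + ρ * (y (i - 1) 0 + y (i + 1) 0))
    (h2 : ∀ i, y i 2 = y i 1 + ρ * (y (i - 1) 1 - y (i - 1) 0)
      + ρ * (y (i + 1) 1 - y (i + 1) 0) - 2 * ρ ^ 2 * y i 0)
    (hrec : ∀ i, ∀ k : ℕ, 2 ≤ k →
      y i (k + 1) = y i k + ρ * (y (i - 1) k - y (i - 1) (k - 1))
        + ρ * (y (i + 1) k - y (i + 1) (k - 1))
        - ρ ^ 2 * (y i (k - 1) - y i (k - 2))) :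
    ∀ (k : ℕ), 1 ≤ k → ∀ i : ℤ,
      y i k = y i (k - 1) + ρ ^ k * (y (i - k) 0 + y (i + k) 0) := by
  have d1 : ∀ i, y i 1 - y i 0 = pulse ρ (fun j => y j 0) 1 i := fun i => by
    simp [pulse, h1]
  have d2 : ∀ i, y i 2 - y i 1 = pulse ρ (fun j => y j 0) 2 i := fun i => by
    -- `pulse ρ u 0 i = 2 * u i`: the special step for `y i 2` is the `k = 0` case of `pulse_add_two`.
    rw [pulse_add_two, ← d1, ← d1, h2]
    simp only [pulse, CharP.cast_eq_zero, sub_zero, add_zero]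
    ring
  have increments := eq_pulse_of_recurrence (d := fun k i => y i k - y i (k - 1)) d1 d2
    fun k hk i => by
      obtain ⟨n, rfl⟩ := Nat.exists_eq_add_of_le' hk
      show y i (n + 2 + 1) - y i (n + 2) = ρ * ((y (i - 1) (n + 2) - y (i - 1) (n + 1))
        + (y (i + 1) (n + 2) - y (i + 1) (n + 1))) - ρ ^ 2 * (y i (n + 1) - y i n)
      rw [hrec i (n + 2) (by omega), show n + 2 - 1 = n + 1 from rfl, Nat.add_sub_cancel]
      ring
  intro k hk i
  have := increments k hk i
  simp only [pulse] at this
  linarith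

theorem stmt1 (ρ : ℝ) (hρ : ρ ∈ Set.Ioo (0:ℝ) 1)
    (x : ℤ → ℝ) (M : ℝ) (hx : ∀ i, |x i| < M)
    (y : ℤ → ℕ → ℝ)
    (h0 : ∀ i, y i 0 = (1 - ρ) / (1 + ρ) * x i)
    (h1 : ∀ i, y i 1 = y i 0 + ρ * (y (i - 1) 0 + y (i + 1) 0))
    (h2 : ∀ i, y i 2 = y i 1 + ρ * (y (i - 1) 1 - y (i - 1) 0)
      + ρ * (y (i + 1) 1 - y (i + 1) 0) - 2 * ρ ^ 2 * y i 0)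
    (hrec : ∀ i, ∀ k : ℕ, 2 ≤ k →
      y i (k + 1) = y i k + ρ * (y (i - 1) k - y (i - 1) (k - 1))
        + ρ * (y (i + 1) k - y (i + 1) (k - 1))
        - ρ ^ 2 * (y i (k - 1) - y i (k - 2))) :
    ∀ (k : ℕ), 1 ≤ k → ∀ i : ℤ,
      y i k = y i (k - 1) + ρ ^ k * (y (i - k) 0 + y (i + k) 0) :=
  stmt1_general ρ y h1 h2 hrec
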